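/- arXiv:0806.2391 — 3 statements merged into one kernel-verified Lean document; each statement's English description precedes it below -/
import Mathlib

section
/- Let (X, ρ, μ) be a quasimetric measure space with constants a₀, a₁ ≥ 1, satisfying the growth condition μ(B(a,r)) ≤ C₀ r. Let 1/p < α < 1 and p' = p/(p-1). Then there exists c > 0 independent of a and x such that for all a, x ∈ X with ρ(a,x) > 0, ∫_{E₂(x)} ρ(x,y)^{(α-1)p'} dμ(y) ≤ c ρ(a,x)^{1 + (α-1)p'}, where E₂(x) := {y : ρ(a,x)/(2a₁) ≤ ρ(a,y) ≤ 2a₁ ρ(a,x)}. -/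
/-!
By the quasi-triangle inequality, `E₂(x)` lies in the ball `B(x, K ρ(a,x))` with
`K = 2a₁(a₀ + 2a₁)`, so it suffices to bound `∫_{B(x,R)} ρ(x,y)^β dμ(y)` by `c R^{1+β}`, where
`β = (α - 1)p' ∈ (-1, 0)`. Only the distribution of `f = ρ(x,·)` enters: `μ{f < r} ≤ C₀ r`.
The level set `{f ≤ 0}` is then null, and `{f < R}` is covered, up to it, by the dyadic shells
`R/2^{n+1} < f ≤ R/2^n`. On the `n`-th shell the integrand is at most `(R/2^{n+1})^β` and the
measure at most `2C₀R/2^n`, so the shells contribute a geometric series of ratio `(2·2^β)⁻¹`,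
which is `< 1` exactly because `β > -1`.
-/

open MeasureTheory ENNReal Set

variable {X : Type*} [MeasurableSpace X]

/-- Quasimetric ball `B(a,r) = {x : ρ(a,x) < r}`. -/
def qball (ρ : X → X → ℝ) (a : X) (r : ℝ) : Set X := {x | ρ a x < r}

theorem sub_one_mul_div_sub_one_mem_Ioo {p α : ℝ} (hp : 1 < p) (hα₀ : 1 / p < α) (hα₁ : α < 1) :
    (α - 1) * (p / (p - 1)) ∈ Ioo (-1) 0 := by
  have hp₁ : 0 < p - 1 := sub_pos.2 hp
  have hαp : 1 < α * p := by rwa [div_lt_iff₀ (by linarith)] at hα₀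
  refine ⟨?_, mul_neg_of_neg_of_pos (by linarith) (by positivity)⟩
  rw [mul_div_assoc', lt_div_iff₀ hp₁]
  linarith

theorem inv_two_mul_two_rpow_lt_one {β : ℝ} (hβ : -1 < β) : (2 * (2 : ℝ) ^ β)⁻¹ < 1 := by
  refine inv_lt_one_of_one_lt₀ ?_
  have : (2 : ℝ) ^ (-1 : ℝ) < 2 ^ β := Real.rpow_lt_rpow_of_exponent_lt one_lt_two hβ
  rw [Real.rpow_neg_one] at this
  linarith

theorem rpow_dyadic_mul_eq {R : ℝ} (hR : 0 < R) (C β : ℝ) (n : ℕ) :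
    (R / 2 ^ (n + 1)) ^ β * (C * (2 * (R / 2 ^ n))) =
      2 / 2 ^ β * C * R ^ (1 + β) * (2 * 2 ^ β)⁻¹ ^ n := by
  have h2β : (0 : ℝ) < 2 ^ β := by positivity
  rw [Real.div_rpow hR.le (by positivity), ← Real.rpow_pow_comm zero_le_two, Real.rpow_add hR,
    Real.rpow_one]
  simp only [mul_inv, mul_pow, inv_pow]
  field_simp
  ring

theorem ENNReal.tsum_ofReal_mul_pow {c q : ℝ} (hq₀ : 0 ≤ q) (hq₁ : q < 1) :
    ∑' n : ℕ, ENNReal.ofReal (c * q ^ n) = ENNReal.ofReal (c * (1 - q)⁻¹) := by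
  simp_rw [ENNReal.ofReal_mul' (pow_nonneg hq₀ _), ENNReal.ofReal_pow hq₀, ENNReal.tsum_mul_left,
    ENNReal.tsum_geometric, ENNReal.ofReal_mul' (inv_nonneg.2 (sub_nonneg.2 hq₁.le)),
    ENNReal.ofReal_inv_of_pos (sub_pos.2 hq₁), ENNReal.ofReal_sub _ hq₀, ENNReal.ofReal_one]

theorem preimage_Iio_subset_Iic_union_dyadic {α : Type*} {f : α → ℝ} {R : ℝ} (hR : 0 < R) :
    f ⁻¹' Iio R ⊆ f ⁻¹' Iic 0 ∪ ⋃ n : ℕ, f ⁻¹' Ioc (R / 2 ^ (n + 1)) (R / 2 ^ n) := by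
  intro y (hy : f y < R)
  rcases le_or_gt (f y) 0 with hy0 | hy0
  · exact Or.inl hy0
  obtain ⟨n, hlow, hupp⟩ := exists_nat_pow_near_of_lt_one (div_pos hy0 hR)
    ((div_le_one hR).2 hy.le) (by norm_num : (0 : ℝ) < 1 / 2) (by norm_num)
  refine Or.inr (mem_iUnion.2 ⟨n, ?_, ?_⟩)
  · rwa [one_div_pow, lt_div_iff₀ hR, one_div_mul_eq_div] at hlow
  · rwa [one_div_pow, div_le_iff₀ hR, one_div_mul_eq_div] at hupp

section LinearGrowth

variable {μ : Measure X} {f : X → ℝ} {C : ℝ}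

theorem measure_preimage_Iic_zero_eq_zero
    (hgrow : ∀ r, 0 < r → μ (f ⁻¹' Iio r) ≤ ENNReal.ofReal (C * r)) :
    μ (f ⁻¹' Iic 0) = 0 := by
  have hlim : Filter.Tendsto (fun r => ENNReal.ofReal (C * r)) (nhdsWithin 0 (Ioi 0)) (nhds 0) := by
    have h := (ENNReal.continuous_ofReal.comp (continuous_const_mul C)).tendsto 0
    simp only [Function.comp_def, mul_zero, ENNReal.ofReal_zero] at h
    exact tendsto_nhdsWithin_of_tendsto_nhds h
  refine nonpos_iff_eq_zero.1 (ge_of_tendsto hlim ?_)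
  filter_upwards [self_mem_nhdsWithin] with r hr
  exact (measure_mono fun y (hy : f y ≤ 0) => show f y < r from hy.trans_lt hr).trans (hgrow r hr)

theorem setLIntegral_rpow_dyadic_shell_le (hf : Measurable f)
    (hgrow : ∀ r, 0 < r → μ (f ⁻¹' Iio r) ≤ ENNReal.ofReal (C * r))
    {R β : ℝ} (hR : 0 < R) (hβ : β ≤ 0) (n : ℕ) :
    ∫⁻ y in f ⁻¹' Ioc (R / 2 ^ (n + 1)) (R / 2 ^ n), ENNReal.ofReal (f y ^ β) ∂μ ≤
      ENNReal.ofReal (2 / 2 ^ β * C * R ^ (1 + β) * (2 * 2 ^ β)⁻¹ ^ n) := by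
  have hinner : 0 < R / 2 ^ (n + 1) := by positivity
  calc ∫⁻ y in f ⁻¹' Ioc (R / 2 ^ (n + 1)) (R / 2 ^ n), ENNReal.ofReal (f y ^ β) ∂μ
      ≤ ∫⁻ _ in f ⁻¹' Ioc (R / 2 ^ (n + 1)) (R / 2 ^ n),
          ENNReal.ofReal ((R / 2 ^ (n + 1)) ^ β) ∂μ :=
        setLIntegral_mono' (hf measurableSet_Ioc) fun y hy =>
          ENNReal.ofReal_le_ofReal (Real.rpow_le_rpow_of_nonpos hinner hy.1.le hβ)
    _ = ENNReal.ofReal ((R / 2 ^ (n + 1)) ^ β) * μ (f ⁻¹' Ioc (R / 2 ^ (n + 1)) (R / 2 ^ n)) :=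
        setLIntegral_const _ _
    _ ≤ ENNReal.ofReal ((R / 2 ^ (n + 1)) ^ β) * ENNReal.ofReal (C * (2 * (R / 2 ^ n))) := by
        gcongr
        refine (measure_mono fun y (hy : _ ∧ _) => ?_).trans (hgrow _ (by positivity))
        show f y < 2 * (R / 2 ^ n)
        linarith [hy.2, show 0 < R / 2 ^ n by positivity]
    _ = ENNReal.ofReal (2 / 2 ^ β * C * R ^ (1 + β) * (2 * 2 ^ β)⁻¹ ^ n) := by
        rw [← ENNReal.ofReal_mul (by positivity), rpow_dyadic_mul_eq hR]

theorem setLIntegral_rpow_preimage_Iio_le (hf : Measurable f)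
    (hgrow : ∀ r, 0 < r → μ (f ⁻¹' Iio r) ≤ ENNReal.ofReal (C * r))
    {R β : ℝ} (hR : 0 < R) (hβ₁ : -1 < β) (hβ₀ : β ≤ 0) :
    ∫⁻ y in f ⁻¹' Iio R, ENNReal.ofReal (f y ^ β) ∂μ ≤
      ENNReal.ofReal (2 / 2 ^ β * C * (1 - (2 * 2 ^ β)⁻¹)⁻¹ * R ^ (1 + β)) := by
  calc ∫⁻ y in f ⁻¹' Iio R, ENNReal.ofReal (f y ^ β) ∂μ
      ≤ ∫⁻ y in f ⁻¹' Iic 0 ∪ ⋃ n : ℕ, f ⁻¹' Ioc (R / 2 ^ (n + 1)) (R / 2 ^ n),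
          ENNReal.ofReal (f y ^ β) ∂μ :=
        lintegral_mono_set (preimage_Iio_subset_Iic_union_dyadic hR)
    _ ≤ (∫⁻ y in f ⁻¹' Iic 0, ENNReal.ofReal (f y ^ β) ∂μ) +
          ∫⁻ y in ⋃ n : ℕ, f ⁻¹' Ioc (R / 2 ^ (n + 1)) (R / 2 ^ n),
            ENNReal.ofReal (f y ^ β) ∂μ :=
        lintegral_union_le _ _ _
    _ ≤ ∑' n : ℕ, ∫⁻ y in f ⁻¹' Ioc (R / 2 ^ (n + 1)) (R / 2 ^ n),
          ENNReal.ofReal (f y ^ β) ∂μ := by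
        rw [setLIntegral_measure_zero _ _ (measure_preimage_Iic_zero_eq_zero hgrow), zero_add]
        exact lintegral_iUnion_le _ _
    _ ≤ ∑' n : ℕ, ENNReal.ofReal (2 / 2 ^ β * C * R ^ (1 + β) * (2 * 2 ^ β)⁻¹ ^ n) :=
        ENNReal.tsum_le_tsum (setLIntegral_rpow_dyadic_shell_le hf hgrow hR hβ₀)
    _ = ENNReal.ofReal (2 / 2 ^ β * C * (1 - (2 * 2 ^ β)⁻¹)⁻¹ * R ^ (1 + β)) := by
        rw [ENNReal.tsum_ofReal_mul_pow (by positivity) (inv_two_mul_two_rpow_lt_one hβ₁)]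
        congr 1
        ring

end LinearGrowth

theorem setOf_le_subset_qball {Y : Type*} {ρ : Y → Y → ℝ} {a₀ a₁ : ℝ} (ha₀ : 0 ≤ a₀)
    (ha₁ : 0 < a₁) (hρ_sym : ∀ x y, ρ x y ≤ a₀ * ρ y x)
    (hρ_tri : ∀ x y z, ρ x y ≤ a₁ * (ρ x z + ρ z y)) {a x : Y} (hax : 0 < ρ a x) :
    {y | ρ a y ≤ 2 * a₁ * ρ a x} ⊆ qball ρ x (2 * a₁ * (a₀ + 2 * a₁) * ρ a x) := by
  intro y (hy : ρ a y ≤ 2 * a₁ * ρ a x)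
  show ρ x y < 2 * a₁ * (a₀ + 2 * a₁) * ρ a x
  have hxy : ρ x y ≤ a₁ * ((a₀ + 2 * a₁) * ρ a x) :=
    (hρ_tri x y a).trans (by gcongr; linarith [hρ_sym x a])
  nlinarith [mul_pos (mul_pos ha₁ (by linarith : 0 < a₀ + 2 * a₁)) hax]

theorem integral_E2_estimate_general
    (ρ : X → X → ℝ) (μ : Measure X) (a₀ a₁ : ℝ)
    (ha₀ : 1 ≤ a₀) (ha₁ : 1 ≤ a₁)
    (hρ_sym : ∀ x y, ρ x y ≤ a₀ * ρ y x)
    (hρ_tri : ∀ x y z, ρ x y ≤ a₁ * (ρ x z + ρ z y))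
    (hball_meas : ∀ a r, MeasurableSet (qball ρ a r))
    (C₀ : ℝ) (hC₀ : 0 < C₀)
    (hgrow : ∀ a : X, ∀ r : ℝ, 0 < r → μ (qball ρ a r) ≤ ENNReal.ofReal (C₀ * r))
    (p p' α : ℝ) (hp : 1 < p) (hp' : p' = p / (p - 1))
    (hα₀ : 1/p < α) (hα₁ : α < 1) :
    ∃ c : ℝ, 0 < c ∧ ∀ a x : X, 0 < ρ a x →
      (∫⁻ y in {y | ρ a x / (2 * a₁) ≤ ρ a y ∧ ρ a y ≤ 2 * a₁ * ρ a x},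
          ENNReal.ofReal (ρ x y ^ ((α - 1) * p')) ∂μ) ≤
        ENNReal.ofReal (c * ρ a x ^ (1 + (α - 1) * p')) := by
  obtain ⟨hβ₁, hβ₀⟩ : (α - 1) * p' ∈ Ioo (-1) 0 :=
    hp' ▸ sub_one_mul_div_sub_one_mem_Ioo hp hα₀ hα₁
  set β := (α - 1) * p'
  set K := 2 * a₁ * (a₀ + 2 * a₁)
  have hK : 0 < K := by positivity
  have hq : (0 : ℝ) < 1 - (2 * 2 ^ β)⁻¹ := sub_pos.2 (inv_two_mul_two_rpow_lt_one hβ₁)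
  refine ⟨2 / 2 ^ β * C₀ * (1 - (2 * 2 ^ β)⁻¹)⁻¹ * K ^ (1 + β), by positivity, fun a x hax => ?_⟩
  calc (∫⁻ y in {y | ρ a x / (2 * a₁) ≤ ρ a y ∧ ρ a y ≤ 2 * a₁ * ρ a x},
          ENNReal.ofReal (ρ x y ^ β) ∂μ)
      ≤ ∫⁻ y in qball ρ x (K * ρ a x), ENNReal.ofReal (ρ x y ^ β) ∂μ :=
        lintegral_mono_set fun y hy =>
          setOf_le_subset_qball (by linarith) (by linarith) hρ_sym hρ_tri hax hy.2
    _ ≤ ENNReal.ofReal (2 / 2 ^ β * C₀ * (1 - (2 * 2 ^ β)⁻¹)⁻¹ * (K * ρ a x) ^ (1 + β)) :=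
        setLIntegral_rpow_preimage_Iio_le (measurable_of_Iio (hball_meas x)) (hgrow x)
          (by positivity) hβ₁ hβ₀.le
    _ = ENNReal.ofReal (2 / 2 ^ β * C₀ * (1 - (2 * 2 ^ β)⁻¹)⁻¹ * K ^ (1 + β) * ρ a x ^ (1 + β)) := by
        rw [Real.mul_rpow hK.le hax.le, ← mul_assoc]

/-- Estimate of the kernel integral over the annulus `E₂(x)` under the growth condition. -/
theorem integral_E2_estimate
    (ρ : X → X → ℝ) (μ : Measure X) (a₀ a₁ : ℝ)
    (ha₀ : 1 ≤ a₀) (ha₁ : 1 ≤ a₁)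
    (hρ_nonneg : ∀ x y, 0 ≤ ρ x y)
    (hρ_pos : ∀ x y, x ≠ y → 0 < ρ x y)
    (hρ_self : ∀ x, ρ x x = 0)
    (hρ_sym : ∀ x y, ρ x y ≤ a₀ * ρ y x)
    (hρ_tri : ∀ x y z, ρ x y ≤ a₁ * (ρ x z + ρ z y))
    (hball_meas : ∀ a r, MeasurableSet (qball ρ a r))
    (hball_fin : ∀ a r, μ (qball ρ a r) < ⊤)
    (C₀ : ℝ) (hC₀ : 0 < C₀)
    (hgrow : ∀ a : X, ∀ r : ℝ, 0 < r → μ (qball ρ a r) ≤ ENNReal.ofReal (C₀ * r))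
    (p p' α : ℝ) (hp : 1 < p) (hp' : p' = p / (p - 1))
    (hα₀ : 1/p < α) (hα₁ : α < 1) :
    ∃ c : ℝ, 0 < c ∧ ∀ a x : X, 0 < ρ a x →
      (∫⁻ y in {y | ρ a x / (2 * a₁) ≤ ρ a y ∧ ρ a y ≤ 2 * a₁ * ρ a x},
          ENNReal.ofReal (ρ x y ^ ((α - 1) * p')) ∂μ) ≤
        ENNReal.ofReal (c * ρ a x ^ (1 + (α - 1) * p')) :=
  integral_E2_estimate_general ρ μ a₀ a₁ ha₀ ha₁ hρ_sym hρ_tri hball_meas C₀ hC₀ hgrow p p' α hp hp'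
    hα₀ hα₁
end

section
/- Let (X, ρ, μ) be a space of homogeneous type with μ(X) = ∞ and μ({x}) = 0 for each x ∈ X, and such that B(a,r₂)∖B(a,r₁) ≠ ∅ for all 0 < r₁ < r₂. Then sup over all balls B of μ(B) is infinite, and inf over all balls B with μ(B) > 0 of μ(B) is zero; consequently, if μ(B)^θ ≤ c for all balls B and some constants θ ∈ ℝ and c > 0, then θ = 0. -/
/-! Balls exhaust `X` as the radius grows, so their measures increase to `μ X = ∞`; the balls
around a point shrink to that point, so their measures tend to `μ {a} = 0`; and doubling keeps
every ball of positive measure, since a null ball would make its doubles, hence `X`, null.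
A bound `μ(B)^θ ≤ c` then rules out `θ > 0` through the large balls and `θ < 0` through the
small ones. -/

open MeasureTheory ENNReal Set

variable {X : Type*} [MeasurableSpace X]

section Balls

variable {ρ : X → X → ℝ} {a : X} {μ : Measure X}

omit [MeasurableSpace X] in
theorem qball_mono : Monotone (qball ρ a) := fun _ _ hrs _ hx => lt_of_lt_of_le hx hrs

omit [MeasurableSpace X] in
theorem iUnion_qball_two_pow_mul {r : ℝ} (hr : 0 < r) :
    ⋃ n : ℕ, qball ρ a (2 ^ n * r) = univ :=
  eq_univ_of_forall fun x =>
    let ⟨n, hn⟩ := pow_unbounded_of_one_lt (ρ a x / r) one_lt_two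
    mem_iUnion.2 ⟨n, (div_lt_iff₀ hr).1 hn⟩

theorem measure_qball_pos {C : ℝ≥0∞}
    (hdbl : ∀ r : ℝ, 0 < r → μ (qball ρ a (2 * r)) ≤ C * μ (qball ρ a r))
    (hμ : μ univ ≠ 0) {r : ℝ} (hr : 0 < r) : 0 < μ (qball ρ a r) := by
  refine pos_iff_ne_zero.2 fun h₀ => hμ ?_
  have hnull : ∀ n : ℕ, μ (qball ρ a (2 ^ n * r)) = 0 := by
    intro n
    induction n with
    | zero => simpa using h₀
    | succ n ih =>
      rw [pow_succ', mul_assoc]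
      exact le_antisymm ((hdbl _ (by positivity)).trans_eq (by rw [ih, mul_zero])) zero_le
  rw [← iUnion_qball_two_pow_mul hr]
  exact measure_iUnion_null hnull

theorem exists_lt_measure_qball {M : ℝ≥0∞} (hM : M < μ univ) :
    ∃ r, 0 < r ∧ M < μ (qball ρ a r) := by
  have hmono : Monotone fun n : ℕ => qball ρ a (2 ^ n) :=
    qball_mono.comp (pow_right_mono₀ one_le_two)
  have hunion : ⋃ n : ℕ, qball ρ a (2 ^ n) = univ := by
    simpa using iUnion_qball_two_pow_mul (ρ := ρ) (a := a) one_pos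
  rw [← hunion, hmono.measure_iUnion, lt_iSup_iff] at hM
  obtain ⟨n, hn⟩ := hM
  exact ⟨2 ^ n, by positivity, hn⟩

theorem exists_measure_qball_lt (hρ : ∀ x, a ≠ x → 0 < ρ a x)
    (hmeas : ∀ r, MeasurableSet (qball ρ a r)) (hfin : μ (qball ρ a 1) ≠ ⊤)
    {ε : ℝ≥0∞} (hε : μ {a} < ε) : ∃ r, 0 < r ∧ μ (qball ρ a r) < ε := by
  have hanti : Antitone fun n : ℕ => qball ρ a (1 / ((n : ℝ) + 1)) :=
    qball_mono.comp_antitone fun _ _ hmn => Nat.one_div_le_one_div hmn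
  have hinter : ⋂ n : ℕ, qball ρ a (1 / ((n : ℝ) + 1)) ⊆ {a} := by
    intro x hx
    by_contra hxa
    obtain ⟨n, hn⟩ := exists_nat_one_div_lt (hρ x (Ne.symm hxa))
    exact (mem_iInter.1 hx n).not_ge hn.le
  have htend := tendsto_measure_iInter_atTop (fun _ => (hmeas _).nullMeasurableSet) hanti
    ⟨0, by simpa using hfin⟩
  obtain ⟨n, hn⟩ := (htend.eventually_lt_const ((measure_mono hinter).trans_lt hε)).exists
  exact ⟨_, Nat.one_div_pos_of_nat, hn⟩

end Balls

section Exponent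

variable {ι : Type*} {f : ι → ℝ≥0∞} {θ : ℝ} {c : ℝ≥0∞}

theorem ENNReal.nonpos_of_unbounded_of_rpow_le (hc : c ≠ ⊤) (hf : ∀ M < ⊤, ∃ i, M < f i)
    (hle : ∀ i, f i ^ θ ≤ c) : θ ≤ 0 := by
  by_contra! hθ
  obtain ⟨i, hi⟩ := hf (c ^ θ⁻¹) (rpow_lt_top_of_nonneg (inv_nonneg.2 hθ.le) hc)
  exact (hle i).not_gt ((ENNReal.rpow_inv_lt_iff hθ).1 hi)

theorem ENNReal.nonneg_of_small_of_rpow_le (hc : c ≠ ⊤) (hf : ∀ ε > 0, ∃ i, f i < ε)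
    (hle : ∀ i, f i ^ θ ≤ c) : 0 ≤ θ := by
  have hinv : ∀ M < ⊤, ∃ i, M < (f i)⁻¹ := fun M hM =>
    let ⟨i, hi⟩ := hf M⁻¹ (ENNReal.inv_pos.2 hM.ne)
    ⟨i, ENNReal.lt_inv_iff_lt_inv.1 hi⟩
  have hle_inv : ∀ i, (f i)⁻¹ ^ (-θ) ≤ c := fun i => by
    rw [ENNReal.inv_rpow, ← ENNReal.rpow_neg, neg_neg]
    exact hle i
  linarith [ENNReal.nonpos_of_unbounded_of_rpow_le hc hinv hle_inv]

end Exponent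

theorem ball_measures_unbounded_and_small_general
    (ρ : X → X → ℝ) (μ : Measure X)
    (hρ_pos : ∀ x y, x ≠ y → 0 < ρ x y)
    (hball_meas : ∀ a r, MeasurableSet (qball ρ a r))
    (hball_fin : ∀ a r, μ (qball ρ a r) < ⊤)
    (C₁ : ℝ≥0∞)
    (hdbl : ∀ a : X, ∀ r : ℝ, 0 < r → μ (qball ρ a (2*r)) ≤ C₁ * μ (qball ρ a r))
    (hXinf : μ Set.univ = ⊤) (hatoms : ∀ x : X, μ {x} = 0) :
    (⨆ (a : X) (r : ℝ) (_ : 0 < r), μ (qball ρ a r)) = ⊤ ∧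
    (⨅ (a : X) (r : ℝ) (_ : 0 < r) (_ : 0 < μ (qball ρ a r)), μ (qball ρ a r)) = 0 ∧
    ∀ θ : ℝ, ∀ c : ℝ≥0∞, 0 < c → c ≠ ⊤ →
      (∀ a : X, ∀ r : ℝ, 0 < r → (μ (qball ρ a r)) ^ θ ≤ c) → θ = 0 := by
  have hμ : μ univ ≠ 0 := hXinf ▸ top_ne_zero
  obtain ⟨a, -⟩ := nonempty_of_measure_ne_zero hμ
  have hbig : ∀ M < ⊤, ∃ r, 0 < r ∧ M < μ (qball ρ a r) :=
    fun M hM => exists_lt_measure_qball (hM.trans_eq hXinf.symm)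
  have hsmall : ∀ ε > 0, ∃ r, 0 < r ∧ μ (qball ρ a r) < ε := fun ε hε =>
    exists_measure_qball_lt (hρ_pos a) (hball_meas a) (hball_fin a 1).ne ((hatoms a).trans_lt hε)
  refine ⟨top_unique <| le_of_forall_lt fun M hM => ?_,
    le_antisymm (le_of_forall_gt fun ε hε => ?_) zero_le, fun θ c _ hc hle => ?_⟩
  · obtain ⟨r, hr, hM⟩ := hbig M hM
    exact hM.trans_le (le_iSup₂_of_le a r (le_iSup_of_le hr le_rfl))
  · obtain ⟨r, hr, hε⟩ := hsmall ε hε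
    have hpos := measure_qball_pos (hdbl a) hμ hr
    exact (iInf₂_le_of_le a r (iInf₂_le_of_le hr hpos le_rfl)).trans_lt hε
  · let f : Ioi (0 : ℝ) → ℝ≥0∞ := fun r => μ (qball ρ a r)
    have hle' : ∀ r, f r ^ θ ≤ c := fun r => hle a r r.2
    refine le_antisymm (ENNReal.nonpos_of_unbounded_of_rpow_le hc (fun M hM => ?_) hle')
      (ENNReal.nonneg_of_small_of_rpow_le hc (fun ε hε => ?_) hle')
    · obtain ⟨r, hr, h⟩ := hbig M hM
      exact ⟨⟨r, hr⟩, h⟩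
    · obtain ⟨r, hr, h⟩ := hsmall ε hε
      exact ⟨⟨r, hr⟩, h⟩

/-- On an SHT with infinite total measure, no atoms and nonempty shells, ball measures are
unbounded above and get arbitrarily small; hence `μ(B)^θ ≤ c` for all balls forces `θ = 0`. -/
theorem ball_measures_unbounded_and_small
    (ρ : X → X → ℝ) (μ : Measure X) (a₀ a₁ : ℝ)
    (ha₀ : 1 ≤ a₀) (ha₁ : 1 ≤ a₁)
    (hρ_nonneg : ∀ x y, 0 ≤ ρ x y)
    (hρ_pos : ∀ x y, x ≠ y → 0 < ρ x y)
    (hρ_self : ∀ x, ρ x x = 0)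
    (hρ_sym : ∀ x y, ρ x y ≤ a₀ * ρ y x)
    (hρ_tri : ∀ x y z, ρ x y ≤ a₁ * (ρ x z + ρ z y))
    (hball_meas : ∀ a r, MeasurableSet (qball ρ a r))
    (hball_fin : ∀ a r, μ (qball ρ a r) < ⊤)
    (C₁ : ℝ≥0∞) (hC₁ : 1 < C₁)
    (hdbl : ∀ a : X, ∀ r : ℝ, 0 < r → μ (qball ρ a (2*r)) ≤ C₁ * μ (qball ρ a r))
    (hXinf : μ Set.univ = ⊤) (hatoms : ∀ x : X, μ {x} = 0)
    (hshell : ∀ a : X, ∀ r₁ r₂ : ℝ, 0 < r₁ → r₁ < r₂ →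
      (qball ρ a r₂ \ qball ρ a r₁).Nonempty) :
    (⨆ (a : X) (r : ℝ) (_ : 0 < r), μ (qball ρ a r)) = ⊤ ∧
    (⨅ (a : X) (r : ℝ) (_ : 0 < r) (_ : 0 < μ (qball ρ a r)), μ (qball ρ a r)) = 0 ∧
    ∀ θ : ℝ, ∀ c : ℝ≥0∞, 0 < c → c ≠ ⊤ →
      (∀ a : X, ∀ r : ℝ, 0 < r → (μ (qball ρ a r)) ^ θ ≤ c) → θ = 0 :=
  ball_measures_unbounded_and_small_general ρ μ hρ_pos hball_meas hball_fin C₁ hdbl hXinf hatoms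
end

section
/- Let (X, ρ, μ) be a quasimetric measure space satisfying μ(B(a,r)) ≤ C r^s for all a ∈ X, r > 0, where s = pq(1-α)/(pq+p-q), 1 < p < q < ∞, 0 < α < 1, and suppose λ₁s/p + α - 1 + s/p' < 0 (which holds when 0 < λ₁ < p/q). Then there is c > 0 such that for all a ∈ X, r > 0, and f ≥ 0, for every x ∈ B(a,r): ∫_{X ∖ B(a, 2a₁ r)} f(y) ρ(x,y)^{α-1} dμ(y) ≤ c ‖f‖_{M^{p, λ₁ s}(X,μ)} r^{λ₁ s/p + α - 1 + s/p'}. -/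
open MeasureTheory ENNReal Set

variable {X : Type*} [MeasurableSpace X]

/-- Weighted Morrey norm `‖f‖_{M_β^{p,λ}(X,μ)}`. -/
noncomputable def wMorreyNorm (ρ : X → X → ℝ) (μ : Measure X) (p lam beta : ℝ)
    (f : X → ℝ≥0∞) : ℝ≥0∞ :=
  ⨆ (a : X) (r : ℝ) (_ : 0 < r),
    ((ENNReal.ofReal r) ^ (-lam) *
      ∫⁻ y in qball ρ a r, f y ^ p * ENNReal.ofReal (ρ a y ^ beta) ∂μ) ^ (1/p)

/-- The Morrey condition bounds the `p`-integral of `f` over balls. -/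
lemma morrey_ball_bound (ρ : X → X → ℝ) (μ : Measure X) (p lam : ℝ) (hp : 0 < p)
    (f : X → ℝ≥0∞) (a : X) (R : ℝ) (hR : 0 < R) :
    ∫⁻ y in qball ρ a R, f y ^ p ∂μ ≤
      (ENNReal.ofReal R) ^ lam * (wMorreyNorm ρ μ p lam 0 f) ^ p := by
  set N := wMorreyNorm ρ μ p lam 0 f with hN
  set I := ∫⁻ y in qball ρ a R, f y ^ p ∂μ with hI
  have h1 : ((ENNReal.ofReal R) ^ (-lam) * I) ^ (1/p) ≤ N := by
    have heq : (∫⁻ y in qball ρ a R, f y ^ p * ENNReal.ofReal (ρ a y ^ (0:ℝ)) ∂μ) = I := by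
      rw [hI]; congr 1; funext y; simp [Real.rpow_zero]
    rw [hN, wMorreyNorm]
    refine le_iSup_of_le a (le_iSup_of_le R (le_iSup_of_le hR ?_))
    rw [heq]
  have h2 : (ENNReal.ofReal R) ^ (-lam) * I ≤ N ^ p := by
    have h3 := ENNReal.rpow_le_rpow h1 hp.le
    rwa [← ENNReal.rpow_mul, one_div_mul_cancel hp.ne', ENNReal.rpow_one] at h3
  have hR0 : ENNReal.ofReal R ≠ 0 := by
    simp only [ne_eq, ENNReal.ofReal_eq_zero, not_le]; exact hR
  calc I = (ENNReal.ofReal R) ^ lam * ((ENNReal.ofReal R) ^ (-lam) * I) := by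
        rw [← mul_assoc, ← ENNReal.rpow_add _ _ hR0 ENNReal.ofReal_ne_top,
          add_neg_cancel, ENNReal.rpow_zero, one_mul]
    _ ≤ (ENNReal.ofReal R) ^ lam * N ^ p := mul_le_mul_right h2 _

/-- Hölder's inequality against the constant function `1`. -/
lemma lintegral_le_rpow_mul_meas_rpow (μ : Measure X) {p p' : ℝ}
    (hpq : p.HolderConjugate p') (f : X → ℝ≥0∞) (hf : Measurable f) (B : Set X) :
    ∫⁻ y in B, f y ∂μ ≤ (∫⁻ y in B, f y ^ p ∂μ) ^ (1/p) * (μ B) ^ (1/p') := by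
  have h := ENNReal.lintegral_mul_le_Lp_mul_Lq (μ.restrict B) hpq hf.aemeasurable
    (aemeasurable_const : AEMeasurable (fun _ : X => (1:ℝ≥0∞)) _)
  simpa using h

/-- Pointwise tail estimate for the fractional integral `I_α` used in the proof of
Theorem 3.4 (the Morrey norm `M^{p,λ}` is `wMorreyNorm` with weight exponent `0`). -/
theorem Iop_tail_pointwise_estimate
    (ρ : X → X → ℝ) (μ : Measure X) (a₀ a₁ : ℝ)
    (ha₀ : 1 ≤ a₀) (ha₁ : 1 ≤ a₁)
    (hρ_nonneg : ∀ x y, 0 ≤ ρ x y)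
    (hρ_pos : ∀ x y, x ≠ y → 0 < ρ x y)
    (hρ_self : ∀ x, ρ x x = 0)
    (hρ_sym : ∀ x y, ρ x y ≤ a₀ * ρ y x)
    (hρ_tri : ∀ x y z, ρ x y ≤ a₁ * (ρ x z + ρ z y))
    (hball_meas : ∀ a r, MeasurableSet (qball ρ a r))
    (hball_fin : ∀ a r, μ (qball ρ a r) < ⊤)
    (p q α s p' lam₁ : ℝ)
    (hp : 1 < p) (hpq : p < q) (hα₀ : 0 < α) (hα₁ : α < 1)
    (hs : s = p * q * (1 - α) / (p * q + p - q))
    (hp' : p' = p / (p - 1))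
    (C : ℝ) (hC : 0 < C)
    (hgrow : ∀ a : X, ∀ r : ℝ, 0 < r → μ (qball ρ a r) ≤ ENNReal.ofReal (C * r ^ s))
    (hexp : lam₁ * s / p + α - 1 + s / p' < 0) :
    ∃ c : ℝ≥0∞, 0 < c ∧ c ≠ ⊤ ∧ ∀ a : X, ∀ r : ℝ, 0 < r →
      ∀ f : X → ℝ≥0∞, Measurable f → ∀ x ∈ qball ρ a r,
        (∫⁻ y in (qball ρ a (2 * a₁ * r))ᶜ, f y * ENNReal.ofReal (ρ x y ^ (α - 1)) ∂μ) ≤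
          c * wMorreyNorm ρ μ p (lam₁ * s) 0 f *
            ENNReal.ofReal (r ^ (lam₁ * s / p + α - 1 + s / p')) := by
  have ha₁0 : (0:ℝ) < a₁ := lt_of_lt_of_le one_pos ha₁
  have hp0 : (0:ℝ) < p := lt_trans one_pos hp
  have hconj : p.HolderConjugate p' := by
    rw [hp']; exact Real.HolderConjugate.conjExponent hp
  have hp'0 : (0:ℝ) < p' := hconj.symm.pos
  set θ : ℝ := lam₁ * s / p + α - 1 + s / p' with hθ
  set u : ℝ := lam₁ * s / p with hu
  set v : ℝ := s / p' with hv
  have hθuv : θ = (α - 1) + u + v := by rw [hθ, hu, hv]; ring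
  -- the geometric ratio
  have h2θ : (2:ℝ) ^ θ < 1 := Real.rpow_lt_one_of_one_lt_of_neg one_lt_two hexp
  have h2θ0 : (0:ℝ) < (2:ℝ) ^ θ := Real.rpow_pos_of_pos two_pos θ
  set x₀ : ℝ≥0∞ := ENNReal.ofReal ((2:ℝ) ^ θ) with hx₀
  have hx₀1 : x₀ < 1 := by
    rw [hx₀, ← ENNReal.ofReal_one]
    exact (ENNReal.ofReal_lt_ofReal_iff one_pos).mpr h2θ
  -- the constant
  set K : ℝ := C ^ (1/p') * (4 * a₁) ^ (u + v) with hK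
  have hK0 : (0:ℝ) < K := by
    rw [hK]; positivity
  refine ⟨ENNReal.ofReal K * (1 - x₀)⁻¹, ?_, ?_, ?_⟩
  · apply ENNReal.mul_pos
    · simp [ENNReal.ofReal_eq_zero, not_le, hK0]
    · simp only [ne_eq, ENNReal.inv_eq_zero]
      exact (lt_of_le_of_lt (tsub_le_self) (lt_top_iff_ne_top.mpr one_ne_top)).ne
  · apply ENNReal.mul_ne_top ENNReal.ofReal_ne_top
    simp only [ne_eq, ENNReal.inv_eq_top]
    exact (tsub_pos_of_lt hx₀1).ne'
  intro a r hr f hf x hx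
  set N := wMorreyNorm ρ μ p (lam₁ * s) 0 f with hN
  -- annuli
  set A : ℕ → Set X := fun k =>
    qball ρ a ((2:ℝ) ^ (k + 2) * a₁ * r) \ qball ρ a ((2:ℝ) ^ (k + 1) * a₁ * r) with hA
  -- covering
  have hcover : (qball ρ a (2 * a₁ * r))ᶜ ⊆ ⋃ k, A k := by
    intro y hy
    have hy' : 2 * a₁ * r ≤ ρ a y := not_lt.mp hy
    have hPex : ∃ n : ℕ, ρ a y < (2:ℝ) ^ (n + 2) * a₁ * r := by
      obtain ⟨n, hn⟩ := pow_unbounded_of_one_lt (ρ a y / (a₁ * r)) (one_lt_two (α := ℝ))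
      refine ⟨n, ?_⟩
      have h1 : ρ a y < 2 ^ n * (a₁ * r) := by
        rwa [div_lt_iff₀ (by positivity)] at hn
      have h2 : (2:ℝ) ^ n ≤ 2 ^ (n + 2) := pow_le_pow_right₀ one_le_two (by omega)
      calc ρ a y < 2 ^ n * (a₁ * r) := h1
        _ ≤ 2 ^ (n + 2) * (a₁ * r) := by
            apply mul_le_mul_of_nonneg_right h2 (by positivity)
        _ = 2 ^ (n + 2) * a₁ * r := by ring
    classical
    set k := Nat.find hPex with hk
    have hk1 : ρ a y < (2:ℝ) ^ (k + 2) * a₁ * r := Nat.find_spec hPex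
    have hk2 : ¬ ρ a y < (2:ℝ) ^ (k + 1) * a₁ * r := by
      cases' Nat.eq_zero_or_pos k with h0 h0
      · rw [h0]; push_neg; simpa using hy'
      · have := Nat.find_min hPex (m := k - 1) (by omega)
        have hkk : k - 1 + 2 = k + 1 := by omega
        rwa [hkk] at this
    exact mem_iUnion.mpr ⟨k, hk1, hk2⟩
  -- per-annulus pointwise kernel bound
  have hkernel : ∀ k : ℕ, ∀ y ∈ A k,
      ENNReal.ofReal (ρ x y ^ (α - 1)) ≤ ENNReal.ofReal (((2:ℝ) ^ k * r) ^ (α - 1)) := by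
    intro k y hy
    have hylb : (2:ℝ) ^ (k + 1) * a₁ * r ≤ ρ a y := not_lt.mp hy.2
    have htri := hρ_tri a y x
    have hax : ρ a x < r := hx
    have hxy : (2:ℝ) ^ k * r ≤ ρ x y := by
      have hsum : (2:ℝ) ^ (k + 1) * r ≤ ρ a x + ρ x y := by
        have h1 : (2:ℝ) ^ (k + 1) * a₁ * r ≤ a₁ * (ρ a x + ρ x y) := le_trans hylb htri
        have h2 : a₁ * ((2:ℝ) ^ (k+1) * r) ≤ a₁ * (ρ a x + ρ x y) := by
          calc a₁ * ((2:ℝ) ^ (k+1) * r) = (2:ℝ) ^ (k + 1) * a₁ * r := by ring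
          _ ≤ _ := h1
        exact le_of_mul_le_mul_left h2 ha₁0
      have h3 : (2:ℝ) ^ (k + 1) = 2 ^ k + 2 ^ k := by ring
      have h4 : (1:ℝ) ≤ 2 ^ k := one_le_pow₀ one_le_two
      nlinarith [hρ_nonneg x y, mul_le_mul_of_nonneg_right h4 hr.le]
    apply ENNReal.ofReal_le_ofReal
    exact Real.rpow_le_rpow_of_nonpos (by positivity) hxy (by linarith)
  -- per-annulus integral bound
  have hterm : ∀ k : ℕ, ∫⁻ y in A k, f y * ENNReal.ofReal (ρ x y ^ (α - 1)) ∂μ ≤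
      N * ENNReal.ofReal (K * ((2:ℝ) ^ θ) ^ k * r ^ θ) := by
    intro k
    set t : ℝ := (2:ℝ) ^ k with htd
    have ht : (0:ℝ) < t := by positivity
    set Rk : ℝ := (2:ℝ) ^ (k + 2) * a₁ * r with hRkd
    have hRk0 : (0:ℝ) < Rk := by positivity
    have hRkt : Rk = t * (4 * a₁) * r := by rw [hRkd, htd, pow_add]; ring
    have hBsub : A k ⊆ qball ρ a Rk := diff_subset
    -- the real-number identity
    have ht2 : t ^ θ = ((2:ℝ) ^ θ) ^ k := by
      rw [htd, ← Real.rpow_natCast ((2:ℝ) ^ θ) k, ← Real.rpow_natCast (2:ℝ) k,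
        ← Real.rpow_mul (by norm_num : (0:ℝ) ≤ 2),
        ← Real.rpow_mul (by norm_num : (0:ℝ) ≤ 2), mul_comm]
    have hgk : Rk ^ u * (C * Rk ^ s) ^ (1/p') * (t * r) ^ (α - 1) =
        K * ((2:ℝ) ^ θ) ^ k * r ^ θ := by
      have h1 : (C * Rk ^ s) ^ (1/p') = C ^ (1/p') * Rk ^ v := by
        rw [Real.mul_rpow hC.le (by positivity), ← Real.rpow_mul hRk0.le,
          mul_one_div, hv]
      have h2 : (t * r) ^ (α - 1) = t ^ (α - 1) * r ^ (α - 1) :=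
        Real.mul_rpow ht.le hr.le
      have h3 : ∀ w : ℝ, Rk ^ w = t ^ w * (4 * a₁) ^ w * r ^ w := by
        intro w
        rw [hRkt, Real.mul_rpow (by positivity) hr.le,
          Real.mul_rpow ht.le (by positivity)]
      rw [h1, h2, h3, h3, hK, ← ht2, hθuv,
        Real.rpow_add (by positivity : (0:ℝ) < 4 * a₁),
        Real.rpow_add ht, Real.rpow_add ht, Real.rpow_add hr, Real.rpow_add hr]
      ring
    -- putting the ENNReal chain together
    calc ∫⁻ y in A k, f y * ENNReal.ofReal (ρ x y ^ (α - 1)) ∂μ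
        ≤ ∫⁻ y in A k, f y * ENNReal.ofReal ((t * r) ^ (α - 1)) ∂μ := by
          refine setLIntegral_mono (hf.mul measurable_const) ?_
          intro y hy
          exact mul_le_mul_right (hkernel k y hy) (f y)
      _ = (∫⁻ y in A k, f y ∂μ) * ENNReal.ofReal ((t * r) ^ (α - 1)) :=
          lintegral_mul_const _ hf
      _ ≤ (∫⁻ y in qball ρ a Rk, f y ∂μ) * ENNReal.ofReal ((t * r) ^ (α - 1)) :=
          mul_le_mul_left (lintegral_mono_set hBsub) _
      _ ≤ ((∫⁻ y in qball ρ a Rk, f y ^ p ∂μ) ^ (1/p) * (μ (qball ρ a Rk)) ^ (1/p')) *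
            ENNReal.ofReal ((t * r) ^ (α - 1)) :=
          mul_le_mul_left (lintegral_le_rpow_mul_meas_rpow μ hconj f hf _) _
      _ ≤ (((ENNReal.ofReal Rk) ^ u * N) * (ENNReal.ofReal (C * Rk ^ s)) ^ (1/p')) *
            ENNReal.ofReal ((t * r) ^ (α - 1)) := by
          refine mul_le_mul_left (mul_le_mul' ?_ ?_) _
          · have hmor := morrey_ball_bound ρ μ p (lam₁ * s) hp0 f a Rk hRk0
            have h5 := ENNReal.rpow_le_rpow hmor (one_div_nonneg.mpr hp0.le)
            rwa [ENNReal.mul_rpow_of_nonneg _ _ (one_div_nonneg.mpr hp0.le),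
              ← ENNReal.rpow_mul, ← ENNReal.rpow_mul, mul_one_div, ← hu,
              mul_one_div_cancel hp0.ne', ENNReal.rpow_one] at h5
          · exact ENNReal.rpow_le_rpow (hgrow a Rk hRk0) (one_div_nonneg.mpr hp'0.le)
      _ = N * ENNReal.ofReal (K * ((2:ℝ) ^ θ) ^ k * r ^ θ) := by
          rw [← hgk, ENNReal.ofReal_rpow_of_pos hRk0,
            ENNReal.ofReal_rpow_of_pos (by positivity : (0:ℝ) < C * Rk ^ s),
            ENNReal.ofReal_mul (by positivity : (0:ℝ) ≤ Rk ^ u * (C * Rk ^ s) ^ (1/p')),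
            ENNReal.ofReal_mul (by positivity : (0:ℝ) ≤ Rk ^ u)]
          ring
  -- summation
  have hsum : ∑' k : ℕ, (N * ENNReal.ofReal (K * ((2:ℝ) ^ θ) ^ k * r ^ θ)) =
      N * (ENNReal.ofReal (K * r ^ θ) * (1 - x₀)⁻¹) := by
    have h6 : ∀ k : ℕ, ENNReal.ofReal (K * ((2:ℝ) ^ θ) ^ k * r ^ θ) =
        ENNReal.ofReal (K * r ^ θ) * x₀ ^ k := by
      intro k
      rw [hx₀, ← ENNReal.ofReal_pow h2θ0.le, ← ENNReal.ofReal_mul (by positivity)]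
      ring_nf
    simp only [h6]
    rw [ENNReal.tsum_mul_left, ENNReal.tsum_mul_left, ENNReal.tsum_geometric]
  calc ∫⁻ y in (qball ρ a (2 * a₁ * r))ᶜ, f y * ENNReal.ofReal (ρ x y ^ (α - 1)) ∂μ
      ≤ ∫⁻ y in ⋃ k, A k, f y * ENNReal.ofReal (ρ x y ^ (α - 1)) ∂μ :=
        lintegral_mono_set hcover
    _ ≤ ∑' k : ℕ, ∫⁻ y in A k, f y * ENNReal.ofReal (ρ x y ^ (α - 1)) ∂μ :=
        lintegral_iUnion_le _ _
    _ ≤ ∑' k : ℕ, (N * ENNReal.ofReal (K * ((2:ℝ) ^ θ) ^ k * r ^ θ)) :=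
        ENNReal.tsum_le_tsum hterm
    _ = N * (ENNReal.ofReal (K * r ^ θ) * (1 - x₀)⁻¹) := hsum
    _ = ENNReal.ofReal K * (1 - x₀)⁻¹ * N * ENNReal.ofReal (r ^ θ) := by
        rw [ENNReal.ofReal_mul hK0.le]; ring
end
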